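/- arXiv:2303.05890 — 3 statements merged into one kernel-verified Lean document; each statement's English description precedes it below -/
import Mathlib

section
/- For a prime p ≡ 1 (mod 3) with p > 3, the number of residue classes t mod p for which f_t(x) = x^3 - t·x^2 - (t+3)·x - 1 has three distinct roots in Z/pZ is (p-4)/3. -/
section Aux

variable {K : Type*} [Field K]

private lemma aux_root_ne_zero {t a : K} (ha : a^3 - t*a^2 - (t+3)*a - 1 = 0) : a ≠ 0 := by
  intro h
  exact one_ne_zero (α := K) (by linear_combination -ha + (a^2 - t*a - (t+3))*h)

private lemma aux_root_ne_negone {t a : K} (ha : a^3 - t*a^2 - (t+3)*a - 1 = 0) :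
    a + 1 ≠ 0 := by
  intro h
  exact one_ne_zero (α := K) (by linear_combination ha - (a^2 - (t+1)*a - 2)*h)

/-- If a root satisfies `a² + a + 1 = 0` then every root equals it. -/
private lemma aux_root_eq_of_quad {t a b : K} (hq : a^2 + a + 1 = 0)
    (ha : a^3 - t*a^2 - (t+3)*a - 1 = 0) (hb : b^3 - t*b^2 - (t+3)*b - 1 = 0) :
    b = a := by
  have ht : t - 3*a = 0 := by linear_combination ha - (a - t - 1)*hq
  have h3 : (b - a)^3 = 0 := by
    linear_combination hb + (3*b - a + 1)*hq + (b^2 + b)*ht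
  exact sub_eq_zero.mp (pow_eq_zero_iff (n := 3) (by norm_num) |>.mp h3)

/-- With three distinct roots, the cubic factors completely. -/
private lemma aux_factor {t a b c : K} (hab : a ≠ b) (hac : a ≠ c) (hbc : b ≠ c)
    (ha : a^3 - t*a^2 - (t+3)*a - 1 = 0) (hb : b^3 - t*b^2 - (t+3)*b - 1 = 0)
    (hc : c^3 - t*c^2 - (t+3)*c - 1 = 0) (x : K) :
    x^3 - t*x^2 - (t+3)*x - 1 = (x-a)*((x-b)*(x-c)) := by
  have h1 : (a-b) * (a^2 + a*b + b^2 - t*(a+b) - (t+3)) = 0 := by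
    linear_combination ha - hb
  have h1' : a^2 + a*b + b^2 - t*(a+b) - (t+3) = 0 :=
    (mul_eq_zero.mp h1).resolve_left (sub_ne_zero.mpr hab)
  have h2 : (a-c) * (a^2 + a*c + c^2 - t*(a+c) - (t+3)) = 0 := by
    linear_combination ha - hc
  have h2' : a^2 + a*c + c^2 - t*(a+c) - (t+3) = 0 :=
    (mul_eq_zero.mp h2).resolve_left (sub_ne_zero.mpr hac)
  have h3 : (b-c) * (a+b+c-t) = 0 := by linear_combination h1' - h2'
  have ht : a+b+c-t = 0 := (mul_eq_zero.mp h3).resolve_left (sub_ne_zero.mpr hbc)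
  have he2 : a*b + b*c + c*a + (t+3) = 0 := by linear_combination -h1' + (a+b)*ht
  have he3 : a*b*c - 1 = 0 := by linear_combination ha - a^2*ht + a*he2
  linear_combination x^2*ht - x*he2 + he3

/-- The forward construction: from a good parameter `a`, the value
`t = (a³-3a-1)/(a²+a)` gives a cubic with the three distinct roots
`a`, `-1/(1+a)`, `-(1+a)/a`. -/
private lemma aux_forward {a : K} (h0 : a ≠ 0) (h1' : (1:K) + a ≠ 0)
    (hq1 : a^2 + a + 1 ≠ 0) :
    ∃ b c : K, a ≠ b ∧ a ≠ c ∧ b ≠ c ∧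
      (a^3 - ((a^3 - 3*a - 1)/(a^2+a))*a^2 - (((a^3 - 3*a - 1)/(a^2+a))+3)*a - 1 = 0) ∧
      (b^3 - ((a^3 - 3*a - 1)/(a^2+a))*b^2 - (((a^3 - 3*a - 1)/(a^2+a))+3)*b - 1 = 0) ∧
      (c^3 - ((a^3 - 3*a - 1)/(a^2+a))*c^2 - (((a^3 - 3*a - 1)/(a^2+a))+3)*c - 1 = 0) := by
  have hden : a^2 + a ≠ 0 := by
    intro h
    rcases mul_eq_zero.mp (show a * (1 + a) = 0 by linear_combination h) with h | h
    · exact h0 h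
    · exact h1' h
  set t : K := (a^3 - 3*a - 1)/(a^2+a) with htdef
  set b : K := -1/(1+a) with hbdef
  set c : K := -(1+a)/a with hcdef
  have hta : t * (a^2+a) = a^3 - 3*a - 1 := div_mul_cancel₀ _ hden
  have hb1 : b * (1+a) = -1 := div_mul_cancel₀ _ h1'
  have hc1 : c * a = -(1+a) := div_mul_cancel₀ _ h0
  have hfa : a^3 - t*a^2 - (t+3)*a - 1 = 0 := by linear_combination -hta
  have hfbm : (1+a)^3 * (b^3 - t*b^2 - (t+3)*b - 1) = 0 := by
    linear_combination ((b*(1+a))^2 - b*(1+a) + 1 - t*(1+a)*(b*(1+a)-1)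
      - (t+3)*(1+a)^2) * hb1 + hta
  have hfb : b^3 - t*b^2 - (t+3)*b - 1 = 0 :=
    (mul_eq_zero.mp hfbm).resolve_left (pow_ne_zero 3 h1')
  have hfcm : a^3 * (c^3 - t*c^2 - (t+3)*c - 1) = 0 := by
    linear_combination ((c*a)^2 - c*a*(1+a) + (1+a)^2 - t*a*(c*a - 1 - a)
      - (t+3)*a^2) * hc1 - hta
  have hfc : c^3 - t*c^2 - (t+3)*c - 1 = 0 :=
    (mul_eq_zero.mp hfcm).resolve_left (pow_ne_zero 3 h0)
  refine ⟨b, c, ?_, ?_, ?_, hfa, hfb, hfc⟩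
  · intro h
    apply hq1
    have h' : a * (1+a) = -1 := h.symm ▸ hb1
    linear_combination h'
  · intro h
    apply hq1
    have h' : a * a = -(1+a) := h.symm ▸ hc1
    linear_combination h'
  · intro h
    apply hq1
    have h' : b * a = -(1+a) := h.symm ▸ hc1
    linear_combination (1+a)*h' - a*hb1

end Aux

/-- For a prime `p ≡ 1 (mod 3)` with `p > 3`, exactly `(p-4)/3` residue classes
`t` mod `p` are such that `f_t(x) = x^3 - t x^2 - (t+3) x - 1` has three
distinct roots in `ℤ/pℤ`. -/
theorem count_split_mod_p_one (p : ℕ) [Fact p.Prime] (hp1 : p % 3 = 1) (hp3 : 3 < p) :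
    Nat.card {t : ZMod p // ∃ a b c : ZMod p, a ≠ b ∧ a ≠ c ∧ b ≠ c ∧
      (a^3 - t*a^2 - (t+3)*a - 1 = 0) ∧
      (b^3 - t*b^2 - (t+3)*b - 1 = 0) ∧
      (c^3 - t*c^2 - (t+3)*c - 1 = 0)} = (p - 4) / 3 := by
  classical
  have hp : p.Prime := Fact.out
  have h30 : (3 : ZMod p) ≠ 0 := by
    intro h
    have hd : (p : ℕ) ∣ 3 := by
      have := (ZMod.natCast_eq_zero_iff 3 p).mp (by exact_mod_cast h)
      exact this
    have := Nat.le_of_dvd (by norm_num) hd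
    omega
  haveI : Fact (Nat.Prime 3) := ⟨by norm_num⟩
  have h3dvd : 3 ∣ Fintype.card (ZMod p)ˣ := by
    rw [ZMod.card_units_eq_totient, Nat.totient_prime hp]
    omega
  obtain ⟨g, hg⟩ := exists_prime_orderOf_dvd_card 3 h3dvd
  set ω : ZMod p := (g : ZMod p) with hωdef
  have hω3 : ω^3 = 1 := by
    have h := pow_orderOf_eq_one g
    rw [hg] at h
    simpa using congrArg Units.val h
  have hω1 : ω ≠ 1 := by
    intro h
    have : g = 1 := Units.ext h
    rw [this, orderOf_one] at hg
    omega
  have hq : ω^2 + ω + 1 = 0 := by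
    have h : (ω - 1) * (ω^2 + ω + 1) = 0 := by linear_combination hω3
    exact (mul_eq_zero.mp h).resolve_left (sub_ne_zero.mpr hω1)
  have hquad : ∀ x : ZMod p, x^2 + x + 1 = 0 ↔ x = ω ∨ x = -1 - ω := by
    intro x
    constructor
    · intro hx
      have h : (x - ω) * (x + 1 + ω) = 0 := by linear_combination hx - hq
      rcases mul_eq_zero.mp h with h | h
      · exact Or.inl (by linear_combination h)
      · exact Or.inr (by linear_combination h)
    · rintro (rfl | rfl)
      · exact hq
      · linear_combination hq
  have hω0 : ω ≠ 0 := by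
    intro h; apply one_ne_zero (α := ZMod p); linear_combination hq - (ω + 1)*h
  have hωm1 : ω ≠ -1 := by
    intro h; apply one_ne_zero (α := ZMod p); linear_combination hq - ω*h
  have hωω : ω ≠ -1 - ω := by
    intro h; exact h30 (by linear_combination 4*hq - (2*ω+1)*h)
  set S : Finset (ZMod p) :=
    Finset.univ.filter (fun a : ZMod p => a ≠ 0 ∧ a + 1 ≠ 0 ∧ a^2 + a + 1 ≠ 0) with hSdef
  have hbad : Finset.univ.filter
      (fun a : ZMod p => ¬(a ≠ 0 ∧ a + 1 ≠ 0 ∧ a^2 + a + 1 ≠ 0))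
      = ({0, -1, ω, -1 - ω} : Finset (ZMod p)) := by
    ext x
    simp only [Finset.mem_filter, Finset.mem_univ, true_and, not_and_or, not_not,
      Finset.mem_insert, Finset.mem_singleton]
    constructor
    · rintro (h | h | h)
      · exact Or.inl h
      · exact Or.inr (Or.inl (by linear_combination h))
      · rcases (hquad x).mp h with h | h
        · exact Or.inr (Or.inr (Or.inl h))
        · exact Or.inr (Or.inr (Or.inr h))
    · rintro (rfl | rfl | rfl | rfl)
      · exact Or.inl rfl
      · exact Or.inr (Or.inl (by ring))
      · exact Or.inr (Or.inr hq)
      · exact Or.inr (Or.inr (by linear_combination hq))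
  have hbadcard : ({0, -1, ω, -1 - ω} : Finset (ZMod p)).card = 4 := by
    have h01 : (0 : ZMod p) ≠ -1 := by
      intro h; apply one_ne_zero (α := ZMod p); linear_combination h
    have h0ω : (0 : ZMod p) ≠ ω := fun h => hω0 h.symm
    have h0ω2 : (0 : ZMod p) ≠ -1 - ω := by
      intro h; exact hωm1 (by linear_combination h)
    have h1ω : (-1 : ZMod p) ≠ ω := fun h => hωm1 h.symm
    have h1ω2 : (-1 : ZMod p) ≠ -1 - ω := by
      intro h; exact hω0 (by linear_combination h)
    rw [Finset.card_insert_of_notMem (by simp [h01, h0ω, h0ω2]),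
      Finset.card_insert_of_notMem (by simp [h1ω, h1ω2]),
      Finset.card_insert_of_notMem (by simp [hωω]), Finset.card_singleton]
  have hScard : S.card = p - 4 := by
    have hsplit := Finset.card_filter_add_card_filter_not
      (s := (Finset.univ : Finset (ZMod p)))
      (p := fun a : ZMod p => a ≠ 0 ∧ a + 1 ≠ 0 ∧ a^2 + a + 1 ≠ 0)
    rw [hbad, hbadcard, Finset.card_univ, ZMod.card, ← hSdef] at hsplit
    omega
  set φ : ZMod p → ZMod p := fun a => (a^3 - 3*a - 1) / (a^2 + a) with hφdef
  set Good : ZMod p → Prop := fun t => ∃ a b c : ZMod p, a ≠ b ∧ a ≠ c ∧ b ≠ c ∧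
      (a^3 - t*a^2 - (t+3)*a - 1 = 0) ∧
      (b^3 - t*b^2 - (t+3)*b - 1 = 0) ∧
      (c^3 - t*c^2 - (t+3)*c - 1 = 0) with hGdef
  set T : Finset (ZMod p) := Finset.univ.filter Good with hTdef
  have hmapsto : ∀ a ∈ S, φ a ∈ T := by
    intro a haS
    rw [hSdef, Finset.mem_filter] at haS
    obtain ⟨-, h0, h1, hq1⟩ := haS
    have h1' : (1 : ZMod p) + a ≠ 0 := fun hh => h1 (by linear_combination hh)
    obtain ⟨b, c, hab, hac, hbc, hfa, hfb, hfc⟩ := aux_forward h0 h1' hq1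
    rw [hTdef, Finset.mem_filter]
    exact ⟨Finset.mem_univ _, a, b, c, hab, hac, hbc, hfa, hfb, hfc⟩
  have hfiber : ∀ t ∈ T, (S.filter (fun a => φ a = t)).card = 3 := by
    intro t htT
    rw [hTdef, Finset.mem_filter] at htT
    obtain ⟨-, a, b, c, hab, hac, hbc, ha, hb, hc⟩ := htT
    have hmemS : ∀ x y : ZMod p, x ≠ y →
        (x^3 - t*x^2 - (t+3)*x - 1 = 0) → (y^3 - t*y^2 - (t+3)*y - 1 = 0) → x ∈ S := by
      intro x y hxy hx hy
      rw [hSdef, Finset.mem_filter]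
      refine ⟨Finset.mem_univ _, aux_root_ne_zero hx, aux_root_ne_negone hx, ?_⟩
      intro hqx
      exact hxy (aux_root_eq_of_quad hqx hx hy).symm
    have haS : a ∈ S := hmemS a b hab ha hb
    have hbS : b ∈ S := hmemS b a (Ne.symm hab) hb ha
    have hcS : c ∈ S := hmemS c a (Ne.symm hac) hc ha
    have hiff : ∀ x ∈ S, (φ x = t ↔ x^3 - t*x^2 - (t+3)*x - 1 = 0) := by
      intro x hxS
      rw [hSdef, Finset.mem_filter] at hxS
      obtain ⟨-, h0, h1, -⟩ := hxS
      have hden : x^2 + x ≠ 0 := by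
        intro h
        rcases mul_eq_zero.mp (show x * (x + 1) = 0 by linear_combination h) with h | h
        · exact h0 h
        · exact h1 h
      rw [hφdef]
      simp only
      rw [div_eq_iff hden]
      constructor
      · intro h; linear_combination h
      · intro h; linear_combination h
    have hset : S.filter (fun x => φ x = t) = {a, b, c} := by
      ext x
      simp only [Finset.mem_filter, Finset.mem_insert, Finset.mem_singleton]
      constructor
      · rintro ⟨hxS, hφx⟩
        have hx : x^3 - t*x^2 - (t+3)*x - 1 = 0 := (hiff x hxS).mp hφx
        have hfac := aux_factor hab hac hbc ha hb hc x
        rw [hx] at hfac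
        rcases mul_eq_zero.mp hfac.symm with h | h
        · exact Or.inl (sub_eq_zero.mp h)
        · rcases mul_eq_zero.mp h with h | h
          · exact Or.inr (Or.inl (sub_eq_zero.mp h))
          · exact Or.inr (Or.inr (sub_eq_zero.mp h))
      · rintro (rfl | rfl | rfl)
        · exact ⟨haS, (hiff x haS).mpr ha⟩
        · exact ⟨hbS, (hiff x hbS).mpr hb⟩
        · exact ⟨hcS, (hiff x hcS).mpr hc⟩
    rw [hset]
    rw [Finset.card_insert_of_notMem (by simp [hab, hac]),
      Finset.card_insert_of_notMem (by simp [hbc]), Finset.card_singleton]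
  have hcount : S.card = 3 * T.card := by
    rw [Finset.card_eq_sum_card_fiberwise hmapsto,
      Finset.sum_congr rfl hfiber, Finset.sum_const, smul_eq_mul, mul_comm]
  have hTcard : T.card = (p - 4) / 3 := by
    rw [hScard] at hcount
    omega
  rw [Nat.card_eq_fintype_card, Fintype.card_subtype]
  exact hTcard
end

section
/- For a prime p ≡ 2 (mod 3), the number of residue classes t mod p for which f_t(x) = x^3 - t·x^2 - (t+3)·x - 1 has three distinct roots in Z/pZ is (p-2)/3. -/
/-!
`f_t` is Shanks' simplest cubic. Since `f_t(a) = a³ - 3a - 1 - t·a(a + 1)`, a root `a` of `f_t` is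
never `0` or `-1` and determines `t = param a = (a³ - 3a - 1) / (a(a + 1))`. The Möbius map
`rot a = -1/(1 + a)` permutes the roots of every `f_t`, and any two roots `a`, `b` satisfy
`b ∈ {a, rot a, rot (rot a)}`. These three are distinct as soon as `x² + x + 1` has no root, which
in a field of order `q ≡ 2 (mod 3)` follows from `x^(q-1) = 1`. So `param` is three-to-one from
`K ∖ {0, -1}` onto the set of `t` for which `f_t` has three distinct roots, and that set has
`(q - 2) / 3` elements.
-/

open Finset

theorem FiniteField.sq_add_self_add_one_ne_zero {K : Type*} [Field K] [Fintype K]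
    (hK : Fintype.card K % 3 = 2) (x : K) : x ^ 2 + x + 1 ≠ 0 := by
  intro h
  have hx3 : x ^ 3 = 1 := by linear_combination (x - 1) * h
  have hx0 : x ≠ 0 := by rintro rfl; simp at h
  obtain ⟨k, hk⟩ : ∃ k, Fintype.card K = 3 * k + 2 := ⟨Fintype.card K / 3, by omega⟩
  have hx1 : x = 1 :=
    calc x = (x ^ 3) ^ k * x := by rw [hx3, one_pow, one_mul]
      _ = x ^ (Fintype.card K - 1) := by rw [← pow_mul, ← pow_succ, hk]; congr 1
      _ = 1 := FiniteField.pow_card_sub_one_eq_one x hx0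
  have h3 : (3 : K) = 0 := by rw [hx1] at h; linear_combination h
  have hq := FiniteField.cast_card_eq_zero K
  rw [hk] at hq
  push_cast at hq
  exact one_ne_zero (α := K) (by linear_combination (1 + (k : K)) * h3 - hq)

namespace SimplestCubic

variable {K : Type*} [Field K]

def cubic (t a : K) : K := a ^ 3 - t * a ^ 2 - (t + 3) * a - 1

def param (a : K) : K := (a ^ 3 - 3 * a - 1) / (a * (a + 1))

def rot (a : K) : K := -(1 + a)⁻¹

theorem cubic_eq (t a : K) : cubic t a = a ^ 3 - 3 * a - 1 - t * (a * (a + 1)) := by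
  unfold cubic; ring

theorem mul_add_one_ne_zero_of_cubic_eq_zero {t a : K} (h : cubic t a = 0) :
    a * (a + 1) ≠ 0 := by
  intro h0
  rw [cubic_eq, h0, mul_zero, sub_zero] at h
  rcases mul_eq_zero.mp h0 with rfl | ha
  · exact one_ne_zero (by linear_combination -h)
  · rw [eq_neg_of_add_eq_zero_left ha] at h
    exact one_ne_zero (by linear_combination h)

theorem cubic_eq_zero_iff {t a : K} : cubic t a = 0 ↔ a * (a + 1) ≠ 0 ∧ param a = t := by
  refine ⟨fun h => ⟨mul_add_one_ne_zero_of_cubic_eq_zero h, ?_⟩, fun ⟨ha, h⟩ => ?_⟩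
  · rw [param, div_eq_iff (mul_add_one_ne_zero_of_cubic_eq_zero h)]
    rw [cubic_eq] at h
    linear_combination h
  · rw [param, div_eq_iff ha] at h
    rw [cubic_eq]
    linear_combination h

theorem one_add_ne_zero_of_cubic_eq_zero {t a : K} (h : cubic t a = 0) : 1 + a ≠ 0 := by
  rw [add_comm]
  exact right_ne_zero_of_mul (mul_add_one_ne_zero_of_cubic_eq_zero h)

theorem cubic_rot_eq_zero {t a : K} (h : cubic t a = 0) : cubic t (rot a) = 0 := by
  have ha := one_add_ne_zero_of_cubic_eq_zero h
  unfold cubic rot at *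
  field_simp
  linear_combination -h

theorem rot_rot {a : K} (ha : a * (a + 1) ≠ 0) : rot (rot a) = -(1 + a) / a := by
  have ha0 : a ≠ 0 := left_ne_zero_of_mul ha
  have ha1 : 1 + a ≠ 0 := by rw [add_comm]; exact right_ne_zero_of_mul ha
  have h1 : 1 + rot a = a / (1 + a) := by unfold rot; field_simp; ring
  rw [rot, h1, inv_div, neg_div]

theorem eq_or_eq_rot_or_eq_rot_rot {t a b : K} (ha : cubic t a = 0) (hb : cubic t b = 0) :
    b = a ∨ b = rot a ∨ b = rot (rot a) := by
  have ha' := mul_add_one_ne_zero_of_cubic_eq_zero ha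
  have ha0 : a ≠ 0 := left_ne_zero_of_mul ha'
  have ha1 := one_add_ne_zero_of_cubic_eq_zero ha
  have key : (b - a) * (b * (1 + a) + 1) * (a * b + 1 + a) = 0 := by
    unfold cubic at ha hb
    linear_combination (a * (1 + a)) * hb - (b * (1 + b)) * ha
  rw [rot_rot ha', rot]
  rcases mul_eq_zero.mp key with key | h
  · rcases mul_eq_zero.mp key with h | h
    · exact .inl (by linear_combination h)
    · refine .inr (.inl ?_)
      field_simp
      linear_combination h
  · refine .inr (.inr ?_)
    field_simp
    linear_combination h

theorem rot_ne_self (hK : ∀ x : K, x ^ 2 + x + 1 ≠ 0) {t a : K} (h : cubic t a = 0) :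
    rot a ≠ a := by
  have ha := one_add_ne_zero_of_cubic_eq_zero h
  intro h'
  apply hK a
  unfold rot at h'
  field_simp at h'
  linear_combination -h'

theorem rot_rot_ne_self (hK : ∀ x : K, x ^ 2 + x + 1 ≠ 0) {t a : K} (h : cubic t a = 0) :
    rot (rot a) ≠ a := by
  have ha := mul_add_one_ne_zero_of_cubic_eq_zero h
  have ha0 : a ≠ 0 := left_ne_zero_of_mul ha
  intro h'
  apply hK a
  rw [rot_rot ha] at h'
  field_simp at h'
  linear_combination -h'

theorem exists_three_distinct_roots_iff (hK : ∀ x : K, x ^ 2 + x + 1 ≠ 0) {t : K} :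
    (∃ a b c : K, a ≠ b ∧ a ≠ c ∧ b ≠ c ∧ cubic t a = 0 ∧ cubic t b = 0 ∧ cubic t c = 0) ↔
      ∃ a, cubic t a = 0 := by
  refine ⟨fun ⟨a, _, _, _, _, _, ha, _⟩ => ⟨a, ha⟩, fun ⟨a, ha⟩ => ?_⟩
  have hb := cubic_rot_eq_zero ha
  exact ⟨a, rot a, rot (rot a), (rot_ne_self hK ha).symm, (rot_rot_ne_self hK ha).symm,
    (rot_ne_self hK hb).symm, ha, hb, cubic_rot_eq_zero hb⟩

section Finite

variable [Fintype K] [DecidableEq K]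

theorem filter_cubic_eq_zero {t a : K} (h : cubic t a = 0) :
    ({b | cubic t b = 0} : Finset K) = {a, rot a, rot (rot a)} := by
  ext b
  simp only [mem_filter, mem_univ, true_and, mem_insert, mem_singleton]
  refine ⟨eq_or_eq_rot_or_eq_rot_rot h, ?_⟩
  rintro (rfl | rfl | rfl)
  exacts [h, cubic_rot_eq_zero h, cubic_rot_eq_zero (cubic_rot_eq_zero h)]

theorem card_filter_cubic_eq_zero (hK : ∀ x : K, x ^ 2 + x + 1 ≠ 0) {t a : K}
    (h : cubic t a = 0) : #({b | cubic t b = 0} : Finset K) = 3 := by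
  rw [filter_cubic_eq_zero h, card_insert_of_notMem,
    card_pair (rot_ne_self hK (cubic_rot_eq_zero h)).symm]
  simp only [mem_insert, mem_singleton, not_or]
  exact ⟨(rot_ne_self hK h).symm, (rot_rot_ne_self hK h).symm⟩

theorem card_filter_mul_add_one_ne_zero :
    #({a | a * (a + 1) ≠ 0} : Finset K) = Fintype.card K - 2 := by
  have h : ({a | a * (a + 1) ≠ 0} : Finset K) = univ \ {0, -1} := by
    ext a
    simp [mul_eq_zero, add_eq_zero_iff_eq_neg]
  rw [h, card_sdiff_of_subset (subset_univ _), card_univ, card_pair (by simp)]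

theorem filter_param_eq (t : K) :
    ({a | a * (a + 1) ≠ 0} : Finset K).filter (param · = t) =
      ({b | cubic t b = 0} : Finset K) := by
  ext
  simp [cubic_eq_zero_iff]

theorem card_eq_three_mul_card_image_param (hK : ∀ x : K, x ^ 2 + x + 1 ≠ 0) :
    #({a | a * (a + 1) ≠ 0} : Finset K) =
      3 * #(({a | a * (a + 1) ≠ 0} : Finset K).image param) := by
  rw [card_eq_sum_card_image param, sum_const_nat, mul_comm]
  intro t ht
  obtain ⟨a, ha, rfl⟩ := mem_image.mp ht
  rw [filter_param_eq]
  exact card_filter_cubic_eq_zero hK (cubic_eq_zero_iff.mpr ⟨(mem_filter.mp ha).2, rfl⟩)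

theorem card_image_param (hK : ∀ x : K, x ^ 2 + x + 1 ≠ 0) :
    #(({a | a * (a + 1) ≠ 0} : Finset K).image param) = (Fintype.card K - 2) / 3 := by
  have h := card_eq_three_mul_card_image_param hK
  rw [card_filter_mul_add_one_ne_zero] at h
  omega

end Finite

theorem card_exists_three_distinct_roots [Fintype K] (hK : ∀ x : K, x ^ 2 + x + 1 ≠ 0) :
    Nat.card {t : K // ∃ a b c : K, a ≠ b ∧ a ≠ c ∧ b ≠ c ∧
      cubic t a = 0 ∧ cubic t b = 0 ∧ cubic t c = 0} = (Fintype.card K - 2) / 3 := by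
  classical
  set S : Finset K := {a | a * (a + 1) ≠ 0}
  have hmem (t : K) : (∃ a b c : K, a ≠ b ∧ a ≠ c ∧ b ≠ c ∧
      cubic t a = 0 ∧ cubic t b = 0 ∧ cubic t c = 0) ↔ t ∈ S.image param := by
    rw [exists_three_distinct_roots_iff hK]
    simp [S, cubic_eq_zero_iff]
  rw [Nat.card_congr (Equiv.subtypeEquivRight hmem), Nat.card_eq_fintype_card, Fintype.card_coe]
  exact card_image_param hK

end SimplestCubic

/-- For a prime `p ≡ 2 (mod 3)`, exactly `(p-2)/3` residue classes `t` mod `p`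
are such that `f_t(x) = x^3 - t x^2 - (t+3) x - 1` has three distinct roots in
`ℤ/pℤ`. -/
theorem count_split_mod_p_two (p : ℕ) [Fact p.Prime] (hp2 : p % 3 = 2) :
    Nat.card {t : ZMod p // ∃ a b c : ZMod p, a ≠ b ∧ a ≠ c ∧ b ≠ c ∧
      (a^3 - t*a^2 - (t+3)*a - 1 = 0) ∧
      (b^3 - t*b^2 - (t+3)*b - 1 = 0) ∧
      (c^3 - t*c^2 - (t+3)*c - 1 = 0)} = (p - 2) / 3 := by
  have hK := FiniteField.sq_add_self_add_one_ne_zero (K := ZMod p) (by rwa [ZMod.card])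
  have h := SimplestCubic.card_exists_three_distinct_roots hK
  rwa [ZMod.card] at h
end

section
/- For every prime p ≥ 3k+2 with k ≥ 1, there exist at least k distinct residue classes t mod p such that f_t(x) = x^3 - t·x^2 - (t+3)·x - 1 has three distinct roots in Z/pZ. -/
open Polynomial Finset

/-- A finset of roots of a nonzero polynomial has at most `natDegree` elements. -/
lemma finset_roots_le {F : Type*} [Field F] [DecidableEq F] (P : F[X]) (hP : P ≠ 0)
    (s : Finset F) (hs : ∀ a ∈ s, P.eval a = 0) : s.card ≤ P.natDegree := by
  have hsub : s ⊆ P.roots.toFinset := by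
    intro a ha
    exact Multiset.mem_toFinset.2 ((Polynomial.mem_roots hP).2 (hs a ha))
  calc s.card ≤ P.roots.toFinset.card := Finset.card_le_card hsub
    _ ≤ Multiset.card P.roots := P.roots.toFinset_card_le
    _ ≤ P.natDegree := P.card_roots'

lemma cubic_roots_le {p : ℕ} [Fact p.Prime] (t : ZMod p) (s : Finset (ZMod p))
    (hs : ∀ a ∈ s, a^3 - t*a^2 - (t+3)*a - 1 = 0) : s.card ≤ 3 := by
  set P : (ZMod p)[X] := X^3 - C t * X^2 - C (t+3) * X - 1 with hPdef
  have hdeg : P.natDegree = 3 := by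
    rw [hPdef]; compute_degree!
  have hne : P ≠ 0 := by
    intro h; rw [h] at hdeg; simp at hdeg
  have := finset_roots_le P hne s (fun a ha => by
    simpa [hPdef] using hs a ha)
  omega

lemma quad_roots_le {p : ℕ} [Fact p.Prime] (s : Finset (ZMod p))
    (hs : ∀ a ∈ s, a^2 + a + 1 = 0) : s.card ≤ 2 := by
  set P : (ZMod p)[X] := X^2 + X + 1 with hPdef
  have hdeg : P.natDegree = 2 := by
    rw [hPdef]; compute_degree!
  have hne : P ≠ 0 := by
    intro h; rw [h] at hdeg; simp at hdeg
  have := finset_roots_le P hne s (fun a ha => by simpa [hPdef] using hs a ha)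
  omega

lemma key_roots {p : ℕ} [Fact p.Prime] (a t : ZMod p) (h0 : a ≠ 0) (h1 : a + 1 ≠ 0)
    (h2 : a^2 + a + 1 ≠ 0) (ht : t * (a^2 + a) = a^3 - 3*a - 1) :
    ∃ x y z : ZMod p, x ≠ y ∧ x ≠ z ∧ y ≠ z ∧
      (x^3 - t*x^2 - (t+3)*x - 1 = 0) ∧
      (y^3 - t*y^2 - (t+3)*y - 1 = 0) ∧
      (z^3 - t*z^2 - (t+3)*z - 1 = 0) := by
  set b : ZMod p := -(a+1)⁻¹ with hbdef
  set c : ZMod p := -(a+1) * a⁻¹ with hcdef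
  have hb : b * (a+1) = -1 := by
    rw [hbdef, neg_mul, inv_mul_cancel₀ h1]
  have hc : c * a = -(a+1) := by
    rw [hcdef, mul_assoc, inv_mul_cancel₀ h0, mul_one]
  refine ⟨a, b, c, ?_, ?_, ?_, ?_, ?_, ?_⟩
  · intro h
    apply h2
    rw [← h] at hb
    linear_combination hb
  · intro h
    apply h2
    rw [← h] at hc
    linear_combination hc
  · intro h
    apply h2
    rw [h] at hb
    have hca : c = a := by linear_combination hb - hc
    rw [hca] at hc
    linear_combination hc
  · linear_combination -ht
  · have hE : (a+1)^3 * (b^3 - t*b^2 - (t+3)*b - 1) = 0 := by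
      linear_combination ((b*(a+1))^2 - b*(a+1) + 1 - t*(a+1)*(b*(a+1) - 1)
        - (t+3)*(a+1)^2) * hb + ht
    rcases mul_eq_zero.1 hE with h | h
    · exact absurd (pow_eq_zero_iff (by norm_num) |>.1 h) h1
    · exact h
  · have hE : a^3 * (c^3 - t*c^2 - (t+3)*c - 1) = 0 := by
      linear_combination ((c*a)^2 - (c*a)*(a+1) + (a+1)^2 - t*a*(c*a - (a+1))
        - (t+3)*a^2) * hc - ht
    rcases mul_eq_zero.1 hE with h | h
    · exact absurd (pow_eq_zero_iff (by norm_num) |>.1 h) h0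
    · exact h

lemma no_quad_root {p k : ℕ} [Fact p.Prime] (hpk : p = 3*k+2) (a : ZMod p)
    (h : a^2 + a + 1 = 0) : False := by
  have hp := (Fact.out : p.Prime)
  have ha0 : a ≠ 0 := by
    intro h0
    rw [h0] at h
    simp at h
  have ha1 : a ≠ 1 := by
    intro h1
    rw [h1] at h
    norm_num at h
    have h3 : ((3 : ℕ) : ZMod p) = 0 := by exact_mod_cast h
    rw [ZMod.natCast_eq_zero_iff] at h3
    have := (Nat.prime_dvd_prime_iff_eq hp (by norm_num)).1 h3
    omega
  have hcube : a ^ 3 = 1 := by linear_combination (a - 1) * h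
  have hd3 : orderOf a ∣ 3 := orderOf_dvd_of_pow_eq_one hcube
  have hdp : orderOf a ∣ p - 1 :=
    orderOf_dvd_of_pow_eq_one (ZMod.pow_card_sub_one_eq_one ha0)
  have hgcd : Nat.gcd 3 (p - 1) = 1 := by
    have hrec := Nat.gcd_rec 3 (p - 1)
    have hmod : (p - 1) % 3 = 1 := by omega
    rw [Nat.gcd_comm, hrec, hmod] at *
    simp
  have : orderOf a = 1 := Nat.eq_one_of_dvd_one (hgcd ▸ Nat.dvd_gcd hd3 hdp)
  exact ha1 (orderOf_eq_one_iff.1 this)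

/-- For every prime `p ≥ 3k+2` with `k ≥ 1`, there exist at least `k` distinct
residue classes `t` mod `p` such that `f_t(x) = x^3 - t x^2 - (t+3) x - 1` has
three distinct roots in `ℤ/pℤ`. -/
theorem many_split_residues (k p : ℕ) (hk : 1 ≤ k) [Fact p.Prime]
    (hp : 3*k + 2 ≤ p) :
    k ≤ Nat.card {t : ZMod p // ∃ a b c : ZMod p, a ≠ b ∧ a ≠ c ∧ b ≠ c ∧
      (a^3 - t*a^2 - (t+3)*a - 1 = 0) ∧
      (b^3 - t*b^2 - (t+3)*b - 1 = 0) ∧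
      (c^3 - t*c^2 - (t+3)*c - 1 = 0)} := by
  classical
  have hprime := (Fact.out : p.Prime)
  set Q : ZMod p → Prop := fun t => ∃ a b c : ZMod p, a ≠ b ∧ a ≠ c ∧ b ≠ c ∧
      (a^3 - t*a^2 - (t+3)*a - 1 = 0) ∧
      (b^3 - t*b^2 - (t+3)*b - 1 = 0) ∧
      (c^3 - t*c^2 - (t+3)*c - 1 = 0) with hQ
  rw [Nat.card_eq_fintype_card, Fintype.card_subtype]
  set Apred : ZMod p → Prop := fun a => a ≠ 0 ∧ a + 1 ≠ 0 ∧ a^2 + a + 1 ≠ 0 with hApred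
  set A : Finset (ZMod p) := Finset.univ.filter Apred with hA
  set f : ZMod p → ZMod p := fun a => (a^3 - 3*a - 1) * (a^2 + a)⁻¹ with hf
  -- the defining relation
  have hft : ∀ a ∈ A, (f a) * (a^2 + a) = a^3 - 3*a - 1 := by
    intro a ha
    rw [hA, Finset.mem_filter] at ha
    obtain ⟨-, h0, h1, h2⟩ := ha
    have hne : a^2 + a ≠ 0 := by
      intro h
      rcases mul_eq_zero.1 (show a*(a+1) = 0 by linear_combination h) with h' | h'
      exacts [h0 h', h1 h']
    rw [hf]
    field_simp
  -- image lands in the good set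
  have himg : A.image f ⊆ Finset.univ.filter Q := by
    intro t ht
    rw [Finset.mem_image] at ht
    obtain ⟨a, ha, rfl⟩ := ht
    have hrel := hft a ha
    rw [hA, Finset.mem_filter] at ha
    obtain ⟨-, h0, h1, h2⟩ := ha
    rw [Finset.mem_filter]
    exact ⟨Finset.mem_univ _, key_roots a (f a) h0 h1 h2 hrel⟩
  -- fibers are small
  have hfib : A.card ≤ 3 * (A.image f).card := by
    apply Finset.card_le_mul_card_image
    intro t ht
    apply cubic_roots_le t
    intro a ha
    rw [Finset.mem_filter] at ha
    obtain ⟨haA, hfa⟩ := ha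
    have hrel := hft a haA
    rw [hfa] at hrel
    linear_combination -hrel
  -- the complement of A is small
  set R : Finset (ZMod p) := Finset.univ.filter (fun a => a^2 + a + 1 = 0) with hR
  have hRcard : R.card ≤ 2 := quad_roots_le R (fun a ha => by
    rw [hR, Finset.mem_filter] at ha; exact ha.2)
  have hCsub : Finset.univ.filter (fun a => ¬ Apred a) ⊆ insert 0 (insert (-1) R) := by
    intro a ha
    rw [Finset.mem_filter] at ha
    have ha2 : ¬ (a ≠ 0 ∧ a + 1 ≠ 0 ∧ a^2 + a + 1 ≠ 0) := ha.2
    push_neg at ha2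
    simp only [Finset.mem_insert]
    rcases Classical.em (a = 0) with h | h
    · exact Or.inl h
    rcases Classical.em (a + 1 = 0) with h' | h'
    · refine Or.inr (Or.inl ?_); linear_combination h'
    · refine Or.inr (Or.inr ?_)
      rw [hR, Finset.mem_filter]
      exact ⟨Finset.mem_univ _, ha2 h h'⟩
  have hsplit : A.card + (Finset.univ.filter (fun a => ¬ Apred a)).card = p := by
    rw [hA]
    rw [Finset.card_filter_add_card_filter_not]
    simp [ZMod.card]
  have hAcard : 3 * k ≤ A.card := by
    rcases Classical.em (p = 3*k + 2) with hcase | hcase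
    · -- R is empty
      have hRempty : R.card = 0 := by
        rw [Finset.card_eq_zero]
        rw [Finset.eq_empty_iff_forall_notMem]
        intro a ha
        rw [hR, Finset.mem_filter] at ha
        exact no_quad_root hcase a ha.2
      have hC : (Finset.univ.filter (fun a => ¬ Apred a)).card ≤ 2 := by
        calc _ ≤ (insert (0 : ZMod p) (insert (-1) R)).card := Finset.card_le_card hCsub
          _ ≤ (insert (-1 : ZMod p) R).card + 1 := Finset.card_insert_le _ _
          _ ≤ R.card + 1 + 1 := by
              have := Finset.card_insert_le (-1 : ZMod p) R; omega
          _ ≤ 2 := by omega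
      omega
    · -- p ≥ 3k + 4
      have hp3 : p ≠ 3*(k+1) := by
        intro h
        have h3 : (3 : ℕ) ∣ p := ⟨k+1, h⟩
        have := (Nat.prime_dvd_prime_iff_eq (by norm_num) hprime).1 h3
        omega
      have hp4 : 3*k + 4 ≤ p := by omega
      have hC : (Finset.univ.filter (fun a => ¬ Apred a)).card ≤ 4 := by
        calc _ ≤ (insert (0 : ZMod p) (insert (-1) R)).card := Finset.card_le_card hCsub
          _ ≤ (insert (-1 : ZMod p) R).card + 1 := Finset.card_insert_le _ _
          _ ≤ R.card + 1 + 1 := by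
              have := Finset.card_insert_le (-1 : ZMod p) R; omega
          _ ≤ 4 := by omega
      omega
  have hfinal : (A.image f).card ≤ (Finset.univ.filter Q).card :=
    Finset.card_le_card himg
  show k ≤ (Finset.univ.filter Q).card
  omega
end
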